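/- Let ρ, ρ', and σ be positive semidefinite matrices of the same size. Then |F(ρ, σ) − F(ρ', σ)|² ≤ ‖ρ − ρ'‖₁ · tr(σ). -/

import Mathlib

open scoped BigOperators ComplexOrder
open Matrix Filter MeasureTheory

noncomputable section

namespace QMarkov

variable {ι : Type*}

/-- Positive semidefinite square root of a matrix (junk value `0` if not PSD). -/
noncomputable def matSqrt [Fintype ι] (A : Matrix ι ι ℂ) : Matrix ι ι ℂ := by
  classical exact if h : A.PosSemidef then
    (h.1.eigenvectorUnitary : Matrix ι ι ℂ) *
      Matrix.diagonal (fun i => ((Real.sqrt (h.1.eigenvalues i) : ℝ) : ℂ)) *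
      (star h.1.eigenvectorUnitary : Matrix ι ι ℂ) else 0

/-- Trace norm (sum of singular values). -/
noncomputable def traceNorm [Fintype ι] (A : Matrix ι ι ℂ) : ℝ :=
  (matSqrt (Aᴴ * A)).trace.re

/-- Fidelity `F(ρ,σ) = ‖√ρ √σ‖₁`. -/
noncomputable def fid [Fintype ι] (ρ σ : Matrix ι ι ℂ) : ℝ :=
  traceNorm (matSqrt ρ * matSqrt σ)

/-- Generalized trace distance `Δ(ρ,σ) = ½‖ρ-σ‖₁ + ½|tr(ρ-σ)|`. -/
noncomputable def tdist [Fintype ι] (ρ σ : Matrix ι ι ℂ) : ℝ :=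
  (1 / 2) * traceNorm (ρ - σ) + (1 / 2) * ‖(ρ - σ).trace‖

/-- Von Neumann entropy `H(ρ) = -∑ᵢ λᵢ log₂ λᵢ` (junk `0` if not Hermitian);
the convention `0 · log₂ 0 = 0` is automatic since `Real.logb 2 0 = 0`. -/
noncomputable def vnEntropy [Fintype ι] (A : Matrix ι ι ℂ) : ℝ := by
  classical exact
    if h : A.IsHermitian then -∑ i, h.eigenvalues i * Real.logb 2 (h.eigenvalues i) else 0

/-- Matrix base-2 logarithm on the support of a Hermitian matrix (junk `0` if not Hermitian). -/
noncomputable def mlog [Fintype ι] (A : Matrix ι ι ℂ) : Matrix ι ι ℂ := by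
  classical exact
    if h : A.IsHermitian then
      (h.eigenvectorUnitary : Matrix ι ι ℂ) *
        Matrix.diagonal (fun i => (Real.logb 2 (h.eigenvalues i) : ℂ)) *
        (h.eigenvectorUnitary : Matrix ι ι ℂ)ᴴ
    else 0

/-- Square root of the Moore–Penrose pseudoinverse of a Hermitian PSD matrix
(junk `0` if not Hermitian). -/
noncomputable def pinvSqrt [Fintype ι] (A : Matrix ι ι ℂ) : Matrix ι ι ℂ := by
  classical exact
    if h : A.IsHermitian then
      (h.eigenvectorUnitary : Matrix ι ι ℂ) *
        Matrix.diagonal (fun i => ((Real.sqrt (h.eigenvalues i))⁻¹ : ℂ)) *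
        (h.eigenvectorUnitary : Matrix ι ι ℂ)ᴴ
    else 0

/-- Relative entropy `D(ρ‖σ)`, equal to `tr(ρ(log₂ρ - log₂σ))/tr ρ` when the support of
`ρ` is contained in the support of `σ`, and `+∞` otherwise. -/
noncomputable def relEnt [Fintype ι] (ρ σ : Matrix ι ι ℂ) : EReal := by
  classical exact
    if ∀ v : ι → ℂ, σ *ᵥ v = 0 → ρ *ᵥ v = 0 then
      (((ρ * (mlog ρ - mlog σ)).trace.re / ρ.trace.re : ℝ) : EReal)
    else ⊤

/-- `n`-fold tensor power of a matrix. -/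
def tpow (A : Matrix ι ι ℂ) (n : ℕ) : Matrix (Fin n → ι) (Fin n → ι) ℂ :=
  Matrix.of fun x y => ∏ i, A (x i) (y i)

/-- Permutation invariance of a matrix on an `n`-fold tensor power space. -/
def permInv {n : ℕ} (ρ : Matrix (Fin n → ι) (Fin n → ι) ℂ) : Prop :=
  ∀ π : Equiv.Perm (Fin n), ∀ x y, ρ (x ∘ π) (y ∘ π) = ρ x y

/-- Rank-one projector `|φ⟩⟨φ|`. -/
def vecOuter (φ : ι → ℂ) : Matrix ι ι ℂ :=
  Matrix.of fun i j => φ i * star (φ j)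

variable {A B C D E : Type*}

/-- Partial trace over the second factor. -/
def ptr2 [Fintype E] (M : Matrix (D × E) (D × E) ℂ) : Matrix D D ℂ :=
  Matrix.of fun d d' => ∑ e, M (d, e) (d', e)

/-- Partial trace over the `n` copies of `E` of a matrix on `(D ⊗ E)^⊗n`. -/
def ptrPow [Fintype E] {n : ℕ} (M : Matrix (Fin n → D × E) (Fin n → D × E) ℂ) :
    Matrix (Fin n → D) (Fin n → D) ℂ :=
  Matrix.of fun x y => ∑ e : Fin n → E, M (fun i => (x i, e i)) (fun i => (y i, e i))

/-- Marginal `ρ_AB` of a tripartite matrix. -/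
def margAB [Fintype C] (ρ : Matrix (A × B × C) (A × B × C) ℂ) : Matrix (A × B) (A × B) ℂ :=
  Matrix.of fun x y => ∑ c, ρ (x.1, x.2, c) (y.1, y.2, c)

/-- Marginal `ρ_BC` of a tripartite matrix. -/
def margBC [Fintype A] (ρ : Matrix (A × B × C) (A × B × C) ℂ) : Matrix (B × C) (B × C) ℂ :=
  Matrix.of fun x y => ∑ a, ρ (a, x.1, x.2) (a, y.1, y.2)

/-- Marginal `ρ_B` of a tripartite matrix. -/
def margB [Fintype A] [Fintype C] (ρ : Matrix (A × B × C) (A × B × C) ℂ) : Matrix B B ℂ :=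
  Matrix.of fun b b' => ∑ a, ∑ c, ρ (a, b, c) (a, b', c)

/-- Conditional mutual information `I(A:C|B)_ρ = H(ρ_AB) + H(ρ_BC) - H(ρ_B) - H(ρ_ABC)`. -/
noncomputable def cmi [Fintype A] [Fintype B] [Fintype C]
    (ρ : Matrix (A × B × C) (A × B × C) ℂ) : ℝ :=
  vnEntropy (margAB ρ) + vnEntropy (margBC ρ) - vnEntropy (margB ρ) - vnEntropy ρ

/-- Application of `I_A ⊗ T` to a matrix on `A ⊗ B`, for `T` a map from matrices over `B`
to matrices over `B ⊗ C`. -/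
def extT (T : Matrix B B ℂ → Matrix (B × C) (B × C) ℂ)
    (ρ : Matrix (A × B) (A × B) ℂ) : Matrix (A × B × C) (A × B × C) ℂ :=
  Matrix.of fun x y => T (Matrix.of fun b b' => ρ (x.1, b) (y.1, b')) x.2 y.2

/-- `M ⊗ id` on `B ⊗ C`. -/
def kronId (M : Matrix B B ℂ) : Matrix (B × C) (B × C) ℂ := by
  classical exact Matrix.of fun x y => if x.2 = y.2 then M x.1 y.1 else 0

end QMarkov

namespace QMarkov
variable {A B C : Type*}

/-- Marginal on the first and third factors of a tripartite matrix. -/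
def marg13 [Fintype B] (ρ : Matrix (A × B × C) (A × B × C) ℂ) : Matrix (A × C) (A × C) ℂ :=
  Matrix.of fun x y => ∑ b, ρ (x.1, b, x.2) (y.1, b, y.2)

/-- Marginal on the third factor of a tripartite matrix. -/
def marg3 [Fintype A] [Fintype B] (ρ : Matrix (A × B × C) (A × B × C) ℂ) : Matrix C C ℂ :=
  Matrix.of fun c c' => ∑ a, ∑ b, ρ (a, b, c) (a, b, c')

/-- Conditional mutual information `I(first : second | third)` of a tripartite matrix, i.e.
for `ρ` on `A ⊗ C ⊗ E` this is `I(A:C|E)_ρ = H(ρ_AE) + H(ρ_CE) - H(ρ_E) - H(ρ_ACE)`. -/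
noncomputable def cmi13 [Fintype A] [Fintype B] [Fintype C]
    (ρ : Matrix (A × B × C) (A × B × C) ℂ) : ℝ :=
  vnEntropy (marg13 ρ) + vnEntropy (margBC ρ) - vnEntropy (marg3 ρ) - vnEntropy ρ

end QMarkov

/-!
Write `A = √ρ`, `B = √ρ'`, `S = √σ`. The triangle inequality for the trace norm gives
`|F(ρ,σ) - F(ρ',σ)| ≤ ‖(A - B) S‖₁`, Hölder's inequality bounds this by `‖A - B‖₂ ‖S‖₂`, where
`‖S‖₂² = tr σ`, and the Powers–Størmer inequality gives `‖A - B‖₂² ≤ ‖A² - B²‖₁ = ‖ρ - ρ'‖₁`.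
All three trace-norm facts come from the variational bound `Re tr (Wᴴ M) ≤ ‖M‖₁` for contractions
`W`, which is an equality for the polar factor of `M`; for Powers–Størmer one takes for `W` the sign
of the Hermitian matrix `A - B`.
-/

open scoped MatrixOrder

namespace Matrix

section FunctionalCalculus

variable {𝕜 : Type*} [RCLike 𝕜] {ι : Type*} [Fintype ι] [DecidableEq ι]

lemma continuousOn_spectrum (A : Matrix ι ι 𝕜) (f : ℝ → ℝ) : ContinuousOn f (spectrum ℝ A) :=
  A.finite_real_spectrum.continuousOn f

lemma PosSemidef.nonneg_of_mem_spectrum {A : Matrix ι ι 𝕜} (hA : A.PosSemidef) {x : ℝ}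
    (hx : x ∈ spectrum ℝ A) : 0 ≤ x :=
  spectrum_nonneg_of_nonneg (nonneg_iff_posSemidef.mpr hA) hx

lemma posSemidef_cfc {A : Matrix ι ι 𝕜} {f : ℝ → ℝ} (hf : ∀ x ∈ spectrum ℝ A, 0 ≤ f x) :
    (cfc f A).PosSemidef :=
  nonneg_iff_posSemidef.mp (cfc_nonneg hf)

lemma posSemidef_one_sub_cfc {A : Matrix ι ι 𝕜} {f : ℝ → ℝ}
    (hf : ∀ x ∈ spectrum ℝ A, f x ≤ 1) : (1 - cfc f A).PosSemidef :=
  le_iff.mp (cfc_le_one f A hf)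

lemma conjTranspose_cfc (A : Matrix ι ι 𝕜) (f : ℝ → ℝ) : (cfc f A)ᴴ = cfc f A :=
  (cfc_predicate f A).star_eq

lemma cfc_mul_self {A : Matrix ι ι 𝕜} (hA : A.IsHermitian) (f : ℝ → ℝ) :
    cfc f A * A = cfc (fun x => f x * x) A := by
  rw [cfc_mul f (fun x => x) A (A.continuousOn_spectrum _) (A.continuousOn_spectrum _),
    cfc_id' ℝ A hA.isSelfAdjoint]

lemma cfc_mul_self_mul_cfc {A : Matrix ι ι 𝕜} (hA : A.IsHermitian) (f g : ℝ → ℝ) :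
    cfc f A * A * cfc g A = cfc (fun x => f x * x * g x) A := by
  rw [cfc_mul_self hA, ← cfc_mul _ _ A (A.continuousOn_spectrum _) (A.continuousOn_spectrum _)]

lemma IsHermitian.posSemidef_cfc_abs_sub {A : Matrix ι ι 𝕜} (hA : A.IsHermitian) :
    (cfc (fun x : ℝ => |x|) A - A).PosSemidef := by
  have h := posSemidef_cfc (A := A) (f := fun x => |x| - x)
    fun x _ => sub_nonneg.mpr (le_abs_self x)
  rwa [cfc_sub _ _ A (A.continuousOn_spectrum _) (A.continuousOn_spectrum _),
    cfc_id' ℝ A hA.isSelfAdjoint] at h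

lemma IsHermitian.posSemidef_cfc_abs_add {A : Matrix ι ι 𝕜} (hA : A.IsHermitian) :
    (cfc (fun x : ℝ => |x|) A + A).PosSemidef := by
  have h := posSemidef_cfc (A := A) (f := fun x => |x| + x)
    fun x _ => by linarith [neg_abs_le x]
  rwa [cfc_add (a := A) (fun x : ℝ => |x|) (fun x => x) (A.continuousOn_spectrum _)
      (A.continuousOn_spectrum _),
    cfc_id' ℝ A hA.isSelfAdjoint] at h

lemma IsHermitian.exists_sign_mul_eq_cfc_abs {A : Matrix ι ι 𝕜} (hA : A.IsHermitian) :
    ∃ S : Matrix ι ι 𝕜, (1 - Sᴴ * S).PosSemidef ∧ Sᴴ = S ∧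
      S * A = cfc (fun x : ℝ => |x|) A ∧ A * S = cfc (fun x : ℝ => |x|) A := by
  have hSA : cfc (fun x => (SignType.sign x : ℝ)) A * A = cfc (fun x : ℝ => |x|) A := by
    rw [cfc_mul_self hA]
    exact cfc_congr fun x _ => sign_mul_self x
  refine ⟨cfc (fun x => (SignType.sign x : ℝ)) A, ?_, conjTranspose_cfc _ _, hSA, ?_⟩
  · rw [conjTranspose_cfc, ← cfc_mul _ _ A (A.continuousOn_spectrum _) (A.continuousOn_spectrum _)]
    refine posSemidef_one_sub_cfc fun x _ => ?_
    rcases lt_trichotomy x 0 with h | h | h <;> simp [h]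
  · rw [← conjTranspose_cfc A (fun x : ℝ => |x|), ← hSA, conjTranspose_mul, conjTranspose_cfc,
      hA.eq]

end FunctionalCalculus

lemma PosSemidef.re_trace_nonneg {ι : Type*} [Fintype ι] {A : Matrix ι ι ℂ}
    (hA : A.PosSemidef) : 0 ≤ A.trace.re :=
  (Complex.nonneg_iff.mp hA.trace_nonneg).1

end Matrix

namespace QMarkov

section TraceNorm

variable {ι : Type*} [Fintype ι]

lemma matSqrt_eq_cfc [DecidableEq ι] {A : Matrix ι ι ℂ} (hA : A.PosSemidef) :
    matSqrt A = cfc Real.sqrt A := by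
  obtain rfl : ‹DecidableEq ι› = fun a b => Classical.propDecidable (a = b) :=
    Subsingleton.elim _ _
  classical
  rw [matSqrt, dif_pos hA, hA.1.cfc_eq, Matrix.IsHermitian.cfc, Unitary.conjStarAlgAut_apply]
  rfl

lemma posSemidef_matSqrt {A : Matrix ι ι ℂ} (hA : A.PosSemidef) : (matSqrt A).PosSemidef := by
  classical
  rw [matSqrt_eq_cfc hA]
  exact posSemidef_cfc fun x _ => Real.sqrt_nonneg x

lemma matSqrt_mul_self {A : Matrix ι ι ℂ} (hA : A.PosSemidef) : matSqrt A * matSqrt A = A := by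
  classical
  rw [matSqrt_eq_cfc hA, ← cfc_mul _ _ A (A.continuousOn_spectrum _) (A.continuousOn_spectrum _)]
  conv_rhs => rw [← cfc_id' ℝ A hA.1]
  exact cfc_congr fun x hx => Real.mul_self_sqrt (hA.nonneg_of_mem_spectrum hx)

lemma re_trace_mul_nonneg {P Q : Matrix ι ι ℂ} (hP : P.PosSemidef) (hQ : Q.PosSemidef) :
    0 ≤ (P * Q).trace.re := by
  rw [← matSqrt_mul_self hQ, ← Matrix.mul_assoc, trace_mul_comm, ← Matrix.mul_assoc]
  nth_rw 1 [← (posSemidef_matSqrt hQ).1.eq]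
  exact (hP.conjTranspose_mul_mul_same _).re_trace_nonneg

/-- The Hilbert–Schmidt (Frobenius) norm `‖X‖₂`. -/
def hsNorm (X : Matrix ι ι ℂ) : ℝ :=
  √(Xᴴ * X).trace.re

lemma hsNorm_nonneg (X : Matrix ι ι ℂ) : 0 ≤ hsNorm X :=
  Real.sqrt_nonneg _

lemma hsNorm_sq (X : Matrix ι ι ℂ) : hsNorm X ^ 2 = (Xᴴ * X).trace.re :=
  Real.sq_sqrt (posSemidef_conjTranspose_mul_self X).re_trace_nonneg

lemma hsNorm_conjTranspose (X : Matrix ι ι ℂ) : hsNorm Xᴴ = hsNorm X := by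
  rw [hsNorm, hsNorm, conjTranspose_conjTranspose, trace_mul_comm]

lemma re_trace_conjTranspose_mul_le (A B : Matrix ι ι ℂ) :
    (Aᴴ * B).trace.re ≤ hsNorm A * hsNorm B := by
  classical
  let _ := Matrix.toMatrixSeminormedAddCommGroup (1 : Matrix ι ι ℂ) PosSemidef.one
  let _ := Matrix.toMatrixInnerProductSpace (1 : Matrix ι ι ℂ) PosSemidef.one
  have hinner (X Y : Matrix ι ι ℂ) : inner ℂ X Y = (Xᴴ * Y).trace := by
    change (Y * 1 * Xᴴ).trace = _
    rw [Matrix.mul_one, trace_mul_comm]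
  have hnorm (X : Matrix ι ι ℂ) : ‖X‖ = hsNorm X := by
    rw [norm_eq_sqrt_re_inner (𝕜 := ℂ), hinner]
    rfl
  rw [← hnorm, ← hnorm, ← hinner]
  exact re_inner_le_norm (𝕜 := ℂ) A B

lemma hsNorm_mul_le_of_posSemidef_one_sub [DecidableEq ι] {W : Matrix ι ι ℂ}
    (hW : (1 - Wᴴ * W).PosSemidef) (Z : Matrix ι ι ℂ) : hsNorm (W * Z) ≤ hsNorm Z := by
  have h := (hW.conjTranspose_mul_mul_same Z).re_trace_nonneg
  rw [Matrix.mul_sub, Matrix.sub_mul, Matrix.mul_one, trace_sub, Complex.sub_re] at h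
  apply Real.sqrt_le_sqrt
  rw [conjTranspose_mul]
  simp only [Matrix.mul_assoc] at h ⊢
  linarith

lemma exists_polar_decomposition [DecidableEq ι] (M : Matrix ι ι ℂ) :
    ∃ V : Matrix ι ι ℂ, (1 - Vᴴ * V).PosSemidef ∧
      V * matSqrt (Mᴴ * M) = M ∧ Vᴴ * M = matSqrt (Mᴴ * M) := by
  have hP : (Mᴴ * M).PosSemidef := posSemidef_conjTranspose_mul_self M
  have hc := (Mᴴ * M).continuousOn_spectrum
  have hsq {x : ℝ} (hx : x ∈ spectrum ℝ (Mᴴ * M)) : ∃ s, √x = s ∧ x = s * s :=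
    ⟨√x, rfl, (Real.mul_self_sqrt (hP.nonneg_of_mem_spectrum hx)).symm⟩
  rw [matSqrt_eq_cfc hP]
  -- since `(√0)⁻¹ = 0`, this is `M` times the pseudo-inverse of `√(Mᴴ * M)`
  refine ⟨M * cfc (fun x => (√x)⁻¹) (Mᴴ * M), ?_, ?_, ?_⟩
  · rw [conjTranspose_mul, conjTranspose_cfc, Matrix.mul_assoc, ← Matrix.mul_assoc Mᴴ,
      ← Matrix.mul_assoc, cfc_mul_self_mul_cfc hP.1]
    refine posSemidef_one_sub_cfc fun x hx => ?_
    obtain ⟨s, hs, rfl⟩ := hsq hx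
    rw [hs]
    rcases eq_or_ne s 0 with h | h
    · simp [h]
    · rw [inv_mul_cancel_left₀ h, mul_inv_cancel₀ h]
  · -- `M` vanishes on the kernel of `Mᴴ * M`, which is where `(√x)⁻¹ * √x` is `0` rather than `1`
    have hF : (M * cfc (fun x => 1 - (√x)⁻¹ * √x) (Mᴴ * M))ᴴ *
        (M * cfc (fun x => 1 - (√x)⁻¹ * √x) (Mᴴ * M)) = 0 := by
      rw [conjTranspose_mul, conjTranspose_cfc, Matrix.mul_assoc, ← Matrix.mul_assoc Mᴴ,
        ← Matrix.mul_assoc, cfc_mul_self_mul_cfc hP.1, ← cfc_zero ℝ (Mᴴ * M)]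
      refine cfc_congr fun x hx => ?_
      obtain ⟨s, hs, rfl⟩ := hsq hx
      rw [hs]
      rcases eq_or_ne s 0 with h | h <;> simp [h]
    rw [cfc_sub _ _ _ (hc _) (hc _), cfc_const_one ℝ _ hP.1.isSelfAdjoint,
      cfc_mul _ _ _ (hc _) (hc _), Matrix.mul_sub, Matrix.mul_one] at hF
    rw [Matrix.mul_assoc]
    exact (sub_eq_zero.mp (conjTranspose_mul_self_eq_zero.mp hF)).symm
  · rw [conjTranspose_mul, conjTranspose_cfc, Matrix.mul_assoc, cfc_mul_self hP.1]
    refine cfc_congr fun x hx => ?_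
    obtain ⟨s, hs, rfl⟩ := hsq hx
    rw [hs]
    rcases eq_or_ne s 0 with h | h <;> simp [h]

lemma re_trace_conjTranspose_mul_le_traceNorm [DecidableEq ι] {W : Matrix ι ι ℂ}
    (hW : (1 - Wᴴ * W).PosSemidef) (M : Matrix ι ι ℂ) : (Wᴴ * M).trace.re ≤ traceNorm M := by
  obtain ⟨V, hV, hVM, -⟩ := exists_polar_decomposition M
  have hAbs := posSemidef_matSqrt (posSemidef_conjTranspose_mul_self M)
  set T := matSqrt (matSqrt (Mᴴ * M))
  have hT : Tᴴ = T := (posSemidef_matSqrt hAbs).1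
  have hTT : T * T = matSqrt (Mᴴ * M) := matSqrt_mul_self hAbs
  have htr : (Wᴴ * M).trace = ((W * T)ᴴ * (V * T)).trace := by
    rw [← hVM, ← hTT, conjTranspose_mul, hT, ← Matrix.mul_assoc, ← Matrix.mul_assoc,
      trace_mul_comm]
    simp only [Matrix.mul_assoc]
  calc (Wᴴ * M).trace.re = ((W * T)ᴴ * (V * T)).trace.re := by rw [htr]
    _ ≤ hsNorm (W * T) * hsNorm (V * T) := re_trace_conjTranspose_mul_le _ _
    _ ≤ hsNorm T * hsNorm T :=
      mul_le_mul (hsNorm_mul_le_of_posSemidef_one_sub hW T)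
        (hsNorm_mul_le_of_posSemidef_one_sub hV T) (hsNorm_nonneg _) (hsNorm_nonneg _)
    _ = traceNorm M := by rw [← sq, hsNorm_sq, hT, hTT, traceNorm]

lemma traceNorm_add_le (X Y : Matrix ι ι ℂ) : traceNorm (X + Y) ≤ traceNorm X + traceNorm Y := by
  classical
  obtain ⟨V, hV, -, hVM⟩ := exists_polar_decomposition (X + Y)
  calc traceNorm (X + Y) = (Vᴴ * X).trace.re + (Vᴴ * Y).trace.re := by
        rw [traceNorm, ← hVM, Matrix.mul_add, trace_add, Complex.add_re]
    _ ≤ traceNorm X + traceNorm Y :=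
      add_le_add (re_trace_conjTranspose_mul_le_traceNorm hV X)
        (re_trace_conjTranspose_mul_le_traceNorm hV Y)

lemma traceNorm_neg (X : Matrix ι ι ℂ) : traceNorm (-X) = traceNorm X := by
  rw [traceNorm, traceNorm, conjTranspose_neg, neg_mul_neg]

lemma abs_traceNorm_sub_traceNorm_le (X Y : Matrix ι ι ℂ) :
    |traceNorm X - traceNorm Y| ≤ traceNorm (X - Y) := by
  have hX := traceNorm_add_le (X - Y) Y
  have hY := traceNorm_add_le (Y - X) X
  rw [sub_add_cancel] at hX hY
  rw [← neg_sub, traceNorm_neg] at hY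
  exact abs_sub_le_iff.mpr ⟨by linarith, by linarith⟩

lemma traceNorm_mul_le (X Y : Matrix ι ι ℂ) : traceNorm (X * Y) ≤ hsNorm X * hsNorm Y := by
  classical
  obtain ⟨V, hV, -, hVM⟩ := exists_polar_decomposition (X * Y)
  calc traceNorm (X * Y) = ((V * Yᴴ)ᴴ * X).trace.re := by
        rw [traceNorm, ← hVM, conjTranspose_mul, conjTranspose_conjTranspose, Matrix.mul_assoc Y,
          trace_mul_comm Y, Matrix.mul_assoc]
    _ ≤ hsNorm (V * Yᴴ) * hsNorm X := re_trace_conjTranspose_mul_le _ _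
    _ ≤ hsNorm Yᴴ * hsNorm X :=
      mul_le_mul_of_nonneg_right (hsNorm_mul_le_of_posSemidef_one_sub hV _) (hsNorm_nonneg _)
    _ = hsNorm X * hsNorm Y := by rw [hsNorm_conjTranspose, mul_comm]

/-- Powers–Størmer inequality. -/
lemma hsNorm_sub_sq_le_traceNorm {A B : Matrix ι ι ℂ} (hA : A.PosSemidef) (hB : B.PosSemidef) :
    hsNorm (A - B) ^ 2 ≤ traceNorm (A * A - B * B) := by
  classical
  have hC : (A - B).IsHermitian := hA.1.sub hB.1
  obtain ⟨S, hS, hSh, hSC, hCS⟩ := hC.exists_sign_mul_eq_cfc_abs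
  have hDA := re_trace_mul_nonneg hC.posSemidef_cfc_abs_sub hA
  have hDB := re_trace_mul_nonneg hC.posSemidef_cfc_abs_add hB
  set D := cfc (fun x : ℝ => |x|) (A - B)
  have hdual : (Sᴴ * (A * A - B * B)).trace.re = (D * A).trace.re + (D * B).trace.re := by
    rw [hSh, show A * A - B * B = A * (A - B) + (A - B) * B by noncomm_ring, Matrix.mul_add,
      trace_add, Complex.add_re, ← Matrix.mul_assoc, trace_mul_cycle, hCS, ← Matrix.mul_assoc,
      hSC]
  rw [Matrix.sub_mul, trace_sub, Complex.sub_re] at hDA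
  rw [Matrix.add_mul, trace_add, Complex.add_re] at hDB
  rw [hsNorm_sq, hC.eq, Matrix.mul_sub, trace_sub, Complex.sub_re]
  -- `tr((A - B) A) - tr((A - B) B) ≤ tr(D A) + tr(D B) = Re tr(Sᴴ (A² - B²)) ≤ ‖A² - B²‖₁`
  linarith [re_trace_conjTranspose_mul_le_traceNorm hS (A * A - B * B)]

end TraceNorm

/-- Continuity of the fidelity with respect to the trace norm:
`|F(ρ,σ) - F(ρ',σ)|² ≤ ‖ρ - ρ'‖₁ · tr σ`. -/
theorem fidelity_continuous_traceNorm
    {ι : Type*} [Fintype ι]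
    (ρ ρ' σ : Matrix ι ι ℂ) (hρ : ρ.PosSemidef) (hρ' : ρ'.PosSemidef) (hσ : σ.PosSemidef) :
    |fid ρ σ - fid ρ' σ| ^ 2 ≤ traceNorm (ρ - ρ') * σ.trace.re := by
  have hfid : |fid ρ σ - fid ρ' σ| ≤ hsNorm (matSqrt ρ - matSqrt ρ') * hsNorm (matSqrt σ) :=
    calc |fid ρ σ - fid ρ' σ| ≤ traceNorm ((matSqrt ρ - matSqrt ρ') * matSqrt σ) := by
          rw [Matrix.sub_mul]; exact abs_traceNorm_sub_traceNorm_le _ _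
      _ ≤ _ := traceNorm_mul_le _ _
  have hρρ' : hsNorm (matSqrt ρ - matSqrt ρ') ^ 2 ≤ traceNorm (ρ - ρ') := by
    simpa only [matSqrt_mul_self hρ, matSqrt_mul_self hρ'] using
      hsNorm_sub_sq_le_traceNorm (posSemidef_matSqrt hρ) (posSemidef_matSqrt hρ')
  have hσ' : hsNorm (matSqrt σ) ^ 2 = σ.trace.re := by
    rw [hsNorm_sq, (posSemidef_matSqrt hσ).1.eq, matSqrt_mul_self hσ]
  calc |fid ρ σ - fid ρ' σ| ^ 2
      ≤ hsNorm (matSqrt ρ - matSqrt ρ') ^ 2 * hsNorm (matSqrt σ) ^ 2 := by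
        rw [← mul_pow]; exact pow_le_pow_left₀ (abs_nonneg _) hfid 2
    _ ≤ traceNorm (ρ - ρ') * σ.trace.re := by
        rw [hσ']; exact mul_le_mul_of_nonneg_right hρρ' hσ.re_trace_nonneg

end QMarkov
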